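/- Under the assumptions of the convergence theorem for quasi-linear iterative soft-thresholding (fixed point x_α), assume further there is a K-sparse minimizer x̂_α of 𝒥_α(x) = ‖F(x)x − b‖² + α‖x‖_{ℓ₁}, and (c₂c₃/√(1−γ̃))‖b‖ < 1. Then ‖x_α − x̂_α‖₂ ≤ √(α c₂‖b‖)/a + ((c₁ + c₃‖x̂‖)/a)‖x̂_α − x̂‖₂, where x̂ satisfies F(x̂)x̂ = b and a = √(1−γ̃) − c₂c₃‖b‖ > 0. -/

import Mathlib

/-!
Write `D = ‖x_α − x̂_α‖`. The difference `x_α − x̂_α` is `(K+k)`-sparse, so the restricted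
isometry bound at `x_α` gives `√(1−γ̃) D ≤ ‖F(x_α)(x_α − x̂_α)‖`. Splitting
`F(x_α)(x_α − x̂_α) = (F(x_α)x_α − b) − (F(x̂_α)x̂_α − b) − (F(x_α) − F(x̂_α))x̂_α`
bounds the right side by the two residuals plus `c₃ D ‖x̂_α‖ ≤ c₂c₃‖b‖ D`; the smallness
condition lets the last term be absorbed into the left side. The residual at `x_α` is small
because `x_α` minimizes the linearized functional, which is at most `αc₂‖b‖` at a feasible point,
and the residual at `x̂_α` is controlled by its distance to the exact solution `x̂`.
-/

noncomputable section
open scoped BigOperators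

def l1Norm {d : ℕ} (x : EuclideanSpace ℝ (Fin d)) : ℝ := ∑ i, |x i|

def suppCard {d : ℕ} (x : EuclideanSpace ℝ (Fin d)) : ℕ :=
  (Finset.univ.filter fun i => x i ≠ 0).card

section SparseVectors

variable {d : ℕ}

lemma l1Norm_nonneg (x : EuclideanSpace ℝ (Fin d)) : 0 ≤ l1Norm x :=
  Finset.sum_nonneg fun i _ => abs_nonneg (x i)

lemma norm_le_l1Norm (x : EuclideanSpace ℝ (Fin d)) : ‖x‖ ≤ l1Norm x := by
  rw [← sq_le_sq₀ (norm_nonneg x) (l1Norm_nonneg x), EuclideanSpace.real_norm_sq_eq]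
  calc ∑ i, x i ^ 2 = ∑ i, |x i| ^ 2 := by simp only [sq_abs]
    _ ≤ l1Norm x ^ 2 := Finset.sum_sq_le_sq_sum_of_nonneg fun i _ => abs_nonneg (x i)

lemma suppCard_sub_le (x y : EuclideanSpace ℝ (Fin d)) :
    suppCard (x - y) ≤ suppCard x + suppCard y := by
  refine (Finset.card_le_card fun i hi => ?_).trans (Finset.card_union_le _ _)
  simp only [Finset.mem_filter, Finset.mem_univ, true_and, Finset.mem_union] at hi ⊢
  by_contra! h
  exact hi (by simp [h.1, h.2])

end SparseVectors

section L1Tikhonov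

variable {d : ℕ} {G : Type*} [NormedAddCommGroup G] [NormedSpace ℝ G]
  (A : EuclideanSpace ℝ (Fin d) →L[ℝ] G) (b : G) (α : ℝ)

/-- The functional `𝒥_α` of the quasi-linear problem is `x ↦ l1Tikhonov (F x) b α x`. -/
def l1Tikhonov (x : EuclideanSpace ℝ (Fin d)) : ℝ := ‖A x - b‖ ^ 2 + α * l1Norm x

variable {A b α}

lemma l1Tikhonov_le_of_apply_eq {x z : EuclideanSpace ℝ (Fin d)}
    (hmin : ∀ y, l1Tikhonov A b α x ≤ l1Tikhonov A b α y) (hz : A z = b) :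
    l1Tikhonov A b α x ≤ α * l1Norm z := by
  simpa [l1Tikhonov, hz] using hmin z

lemma norm_sub_le_sqrt_of_l1Tikhonov_le {x : EuclideanSpace ℝ (Fin d)} {M : ℝ} (hα : 0 ≤ α)
    (h : l1Tikhonov A b α x ≤ M) : ‖A x - b‖ ≤ Real.sqrt M := by
  unfold l1Tikhonov at h
  exact Real.le_sqrt_of_sq_le (by nlinarith [mul_nonneg hα (l1Norm_nonneg x)])

lemma l1Norm_le_of_l1Tikhonov_le {x : EuclideanSpace ℝ (Fin d)} {c : ℝ} (hα : 0 < α)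
    (h : l1Tikhonov A b α x ≤ α * c) : l1Norm x ≤ c := by
  unfold l1Tikhonov at h
  exact le_of_mul_le_mul_left (by nlinarith [sq_nonneg ‖A x - b‖]) hα

end L1Tikhonov

section QuasiLinear

variable {E G : Type*} [NormedAddCommGroup E] [NormedSpace ℝ E]
  [NormedAddCommGroup G] [NormedSpace ℝ G] {F : E → E →L[ℝ] G} {b : G} {c₃ : ℝ}

lemma norm_apply_self_sub_le_of_apply_self_eq {x y : E} {c₁ : ℝ} (h1 : ‖F x‖ ≤ c₁)
    (h3 : ‖F x - F y‖ ≤ c₃ * ‖x - y‖) (hy : F y y = b) :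
    ‖F x x - b‖ ≤ (c₁ + c₃ * ‖y‖) * ‖x - y‖ := by
  have hsplit : F x x - b = F x (x - y) + (F x - F y) y := by
    simp [← hy, map_sub]
  calc ‖F x x - b‖ ≤ ‖F x‖ * ‖x - y‖ + ‖F x - F y‖ * ‖y‖ := by
        rw [hsplit]
        exact (norm_add_le _ _).trans (add_le_add ((F x).le_opNorm _) ((F x - F y).le_opNorm _))
    _ ≤ c₁ * ‖x - y‖ + c₃ * ‖x - y‖ * ‖y‖ := by gcongr
    _ = (c₁ + c₃ * ‖y‖) * ‖x - y‖ := by ring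

lemma mul_norm_sub_le_of_lower_bound {x x' : E} {s R : ℝ}
    (h3 : ‖F x - F x'‖ ≤ c₃ * ‖x - x'‖) (hlower : s * ‖x - x'‖ ≤ ‖F x (x - x')‖)
    (hx' : ‖x'‖ ≤ R) :
    (s - c₃ * R) * ‖x - x'‖ ≤ ‖F x x - b‖ + ‖F x' x' - b‖ := by
  have hsplit : F x (x - x') = (F x x - b) - (F x' x' - b) - (F x - F x') x' := by
    simp [map_sub]
  have hpert : ‖(F x - F x') x'‖ ≤ c₃ * ‖x - x'‖ * R :=
    ((F x - F x').le_opNorm x').trans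
      (mul_le_mul h3 hx' (norm_nonneg x') ((norm_nonneg _).trans h3))
  have htri : ‖F x (x - x')‖ ≤ ‖F x x - b‖ + ‖F x' x' - b‖ + ‖(F x - F x') x'‖ := by
    rw [hsplit]
    exact (norm_sub_le _ _).trans (add_le_add_left (norm_sub_le _ _) _)
  nlinarith

end QuasiLinear

theorem fixed_point_close_to_minimizer_general
    {d n : ℕ}
    (F : EuclideanSpace ℝ (Fin d) → (EuclideanSpace ℝ (Fin d) →L[ℝ] EuclideanSpace ℝ (Fin n)))
    (b : EuclideanSpace ℝ (Fin n)) (α : ℝ) (hα : 0 < α)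
    (c₁ c₂ c₃ : ℝ)
    (γ' : ℝ) (hγ'1 : γ' < 1)
    -- constants for F as in the soft-thresholding theorems
    (h1 : ∀ x, ‖F x‖ ≤ c₁)
    (h2 : ∀ x, ∃ z : EuclideanSpace ℝ (Fin d), F x z = b ∧ l1Norm z ≤ c₂ * ‖b‖)
    (h3 : ∀ x y, ‖F x - F y‖ ≤ c₃ * ‖x - y‖)
    -- the k-sparse fixed point x_α
    (k : ℕ) (K : ℝ) (xα : EuclideanSpace ℝ (Fin d)) (hxα_sparse : suppCard xα ≤ k)
    (hxα_fix : ∀ y, ‖F xα xα - b‖ ^ 2 + α * l1Norm xα ≤ ‖F xα y - b‖ ^ 2 + α * l1Norm y)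
    -- restricted isometry lower bound at x_α on (K+k)-sparse vectors
    (ha : ∀ y : EuclideanSpace ℝ (Fin d), (suppCard y : ℝ) ≤ K + k →
      (1 - γ') * ‖y‖ ^ 2 ≤ ‖F xα y‖ ^ 2)
    -- a K-sparse minimizer x̂_α of 𝒥_α
    (xhα : EuclideanSpace ℝ (Fin d)) (hxhα_sparse : (suppCard xhα : ℝ) ≤ K)
    (hxhα_min : ∀ y, ‖F xhα xhα - b‖ ^ 2 + α * l1Norm xhα ≤ ‖F y y - b‖ ^ 2 + α * l1Norm y)
    -- an exact solution x̂
    (xh : EuclideanSpace ℝ (Fin d)) (hxh : F xh xh = b)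
    -- smallness condition
    (hsmall : (c₂ * c₃ / Real.sqrt (1 - γ')) * ‖b‖ < 1)
    (a : ℝ) (haa : a = Real.sqrt (1 - γ') - c₂ * c₃ * ‖b‖) :
    ‖xα - xhα‖ ≤ Real.sqrt (α * c₂ * ‖b‖) / a + ((c₁ + c₃ * ‖xh‖) / a) * ‖xhα - xh‖ := by
  have hS : 0 < Real.sqrt (1 - γ') := Real.sqrt_pos.mpr (by linarith)
  have ha_pos : 0 < a := by
    rw [div_mul_eq_mul_div, div_lt_one hS] at hsmall
    linarith [mul_right_comm c₂ c₃ ‖b‖]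
  obtain ⟨z, hz, hz_l1⟩ := h2 xα
  have hJα : l1Tikhonov (F xα) b α xα ≤ α * (c₂ * ‖b‖) :=
    (l1Tikhonov_le_of_apply_eq hxα_fix hz).trans (mul_le_mul_of_nonneg_left hz_l1 hα.le)
  have hres : ‖F xα xα - b‖ ≤ Real.sqrt (α * c₂ * ‖b‖) := by
    rw [mul_assoc]; exact norm_sub_le_sqrt_of_l1Tikhonov_le hα.le hJα
  have hxhα_norm : ‖xhα‖ ≤ c₂ * ‖b‖ :=
    (norm_le_l1Norm xhα).trans (l1Norm_le_of_l1Tikhonov_le hα ((hxhα_min xα).trans hJα))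
  have hsupp : (suppCard (xα - xhα) : ℝ) ≤ K + k :=
    calc (suppCard (xα - xhα) : ℝ) ≤ suppCard xhα + suppCard xα := by
          exact_mod_cast (suppCard_sub_le xα xhα).trans_eq (add_comm _ _)
      _ ≤ K + k := add_le_add hxhα_sparse (by exact_mod_cast hxα_sparse)
  have hlower : Real.sqrt (1 - γ') * ‖xα - xhα‖ ≤ ‖F xα (xα - xhα)‖ := by
    rw [← sq_le_sq₀ (by positivity) (norm_nonneg _), mul_pow, Real.sq_sqrt (by linarith)]
    exact ha _ hsupp
  rw [div_mul_eq_mul_div, ← add_div, le_div_iff₀ ha_pos]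
  calc ‖xα - xhα‖ * a = (Real.sqrt (1 - γ') - c₃ * (c₂ * ‖b‖)) * ‖xα - xhα‖ := by
        rw [haa]; ring
    _ ≤ ‖F xα xα - b‖ + ‖F xhα xhα - b‖ :=
        mul_norm_sub_le_of_lower_bound (h3 xα xhα) hlower hxhα_norm
    _ ≤ _ := add_le_add hres (norm_apply_self_sub_le_of_apply_self_eq (h1 xhα) (h3 xhα xh) hxh)

/-- Theorem 4.6 of the paper: the fixed point `x_α` of quasi-linear iterative
soft-thresholding is close to a `K`-sparse minimizer `x̂_α` of
`𝒥_α(x) = ‖F(x)x − b‖² + α‖x‖₁`: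
`‖x_α − x̂_α‖ ≤ √(αc₂‖b‖)/a + ((c₁ + c₃‖x̂‖)/a)‖x̂_α − x̂‖`,
where `F(x̂)x̂ = b` and `a = √(1−γ̃) − c₂c₃‖b‖ > 0`. -/
theorem fixed_point_close_to_minimizer
    {d n : ℕ}
    (F : EuclideanSpace ℝ (Fin d) → (EuclideanSpace ℝ (Fin d) →L[ℝ] EuclideanSpace ℝ (Fin n)))
    (b : EuclideanSpace ℝ (Fin n)) (α : ℝ) (hα : 0 < α)
    (c₁ c₂ c₃ : ℝ) (hc₁ : 0 < c₁) (hc₂ : 0 < c₂) (hc₃ : 0 < c₃)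
    (γ' : ℝ) (hγ'0 : 0 < γ') (hγ'1 : γ' < 1)
    -- constants for F as in the soft-thresholding theorems
    (h1 : ∀ x, ‖F x‖ ≤ c₁)
    (h2 : ∀ x, ∃ z : EuclideanSpace ℝ (Fin d), F x z = b ∧ l1Norm z ≤ c₂ * ‖b‖)
    (h3 : ∀ x y, ‖F x - F y‖ ≤ c₃ * ‖x - y‖)
    -- the k-sparse fixed point x_α
    (k : ℕ) (K : ℝ) (xα : EuclideanSpace ℝ (Fin d)) (hxα_sparse : suppCard xα ≤ k)
    (hxα_fix : ∀ y, ‖F xα xα - b‖ ^ 2 + α * l1Norm xα ≤ ‖F xα y - b‖ ^ 2 + α * l1Norm y)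
    -- restricted isometry lower bound at x_α on (K+k)-sparse vectors
    (ha : ∀ y : EuclideanSpace ℝ (Fin d), (suppCard y : ℝ) ≤ K + k →
      (1 - γ') * ‖y‖ ^ 2 ≤ ‖F xα y‖ ^ 2)
    -- a K-sparse minimizer x̂_α of 𝒥_α
    (xhα : EuclideanSpace ℝ (Fin d)) (hxhα_sparse : (suppCard xhα : ℝ) ≤ K)
    (hxhα_min : ∀ y, ‖F xhα xhα - b‖ ^ 2 + α * l1Norm xhα ≤ ‖F y y - b‖ ^ 2 + α * l1Norm y)
    -- an exact solution x̂
    (xh : EuclideanSpace ℝ (Fin d)) (hxh : F xh xh = b)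
    -- smallness condition
    (hsmall : (c₂ * c₃ / Real.sqrt (1 - γ')) * ‖b‖ < 1)
    (a : ℝ) (haa : a = Real.sqrt (1 - γ') - c₂ * c₃ * ‖b‖) :
    ‖xα - xhα‖ ≤ Real.sqrt (α * c₂ * ‖b‖) / a + ((c₁ + c₃ * ‖xh‖) / a) * ‖xhα - xh‖ :=
  fixed_point_close_to_minimizer_general F b α hα c₁ c₂ c₃ γ' hγ'1 h1 h2 h3 k K xα hxα_sparse
    hxα_fix ha xhα hxhα_sparse hxhα_min xh hxh hsmall a haa
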